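/- Let G be a finite p-group of order p^n with n ≥ 2 having dense CD-subgroups. Then the center Z(G) has order p and the maximal Chermak–Delgado measure m*(G) equals p^{n+1}. -/

import Mathlib

/-!
Taking `H = 1` and a subgroup `K` of order `p²` (which has `1` as a non-maximal subgroup) in the
density condition yields a CD-subgroup `X` of order at most `p`, so `m*(G) = m_G(X) ≤ p · |G|`.
On the other hand `m_G(Z(G)) = |Z(G)| · |G| ≤ m*(G)`, and `Z(G)` is a nontrivial `p`-group, so
`p · |G| ≤ m*(G)` with equality forcing `|Z(G)| = p`.
-/

open Pointwise

/-- Chermak–Delgado measure of a subgroup. -/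
noncomputable def mCD (G : Type*) [Group G] (H : Subgroup G) : ℕ :=
  Nat.card H * Nat.card (Subgroup.centralizer (H : Set G))

/-- Maximal Chermak–Delgado measure. -/
noncomputable def mStar (G : Type*) [Group G] : ℕ :=
  sSup (Set.range (mCD G))

/-- Chermak–Delgado lattice (as a set of subgroups). -/
def CD (G : Type*) [Group G] : Set (Subgroup G) :=
  {H | mCD G H = mStar G}

/-- A group has dense CD-subgroups if for all subgroups H < K with H not
maximal in K, there exists X in CD(G) with H < X < K. -/
def DenseCD (G : Type*) [Group G] : Prop :=
  ∀ H K : Subgroup G, H < K → (∃ L : Subgroup G, H < L ∧ L < K) →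
    ∃ X ∈ CD G, H < X ∧ X < K

section ChermakDelgado

variable {G : Type*} [Group G]

lemma mCD_le_mStar [Finite G] (H : Subgroup G) : mCD G H ≤ mStar G :=
  le_csSup (Set.finite_range _).bddAbove ⟨H, rfl⟩

lemma mCD_le_card_mul_card [Finite G] (H : Subgroup G) : mCD G H ≤ Nat.card H * Nat.card G :=
  Nat.mul_le_mul_left _ (Subgroup.card_le_card_group _)

lemma mCD_center : mCD G (Subgroup.center G) = Nat.card (Subgroup.center G) * Nat.card G := by
  rw [mCD, Subgroup.centralizer_center, Subgroup.card_top]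

lemma Subgroup.card_le_pow_of_lt_of_card_eq_pow_succ [Finite G] {p k : ℕ} (hp : p.Prime)
    {X K : Subgroup G} (hXK : X < K) (hK : Nat.card K = p ^ (k + 1)) : Nat.card X ≤ p ^ k := by
  obtain ⟨j, hj, hX⟩ := (Nat.dvd_prime_pow hp).mp (hK ▸ Subgroup.card_dvd_of_le hXK.le)
  have hjk : j ≠ k + 1 := by
    rintro rfl
    exact hXK.ne (Subgroup.eq_of_le_of_card_ge hXK.le (by rw [hX, hK]))
  rw [hX]
  exact Nat.pow_le_pow_right hp.pos (by omega)

lemma exists_bot_lt_lt_card_eq_sq [Finite G] {p : ℕ} [Fact p.Prime]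
    (hdvd : p ^ 2 ∣ Nat.card G) :
    ∃ L K : Subgroup G, ⊥ < L ∧ L < K ∧ Nat.card K = p ^ 2 := by
  obtain ⟨L, hL⟩ := Sylow.exists_subgroup_card_pow_prime p (n := 1)
    (Nat.pow_dvd_of_le_of_pow_dvd (by norm_num) hdvd)
  obtain ⟨K, hK, hLK⟩ := Sylow.exists_subgroup_card_pow_succ hdvd hL
  have hp := (Fact.out : p.Prime).one_lt
  refine ⟨L, K, ?_, lt_of_le_of_ne hLK ?_, hK⟩
  · rw [bot_lt_iff_ne_bot, ← Subgroup.one_lt_card_iff_ne_bot, hL, pow_one]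
    exact hp
  · rintro rfl
    rw [hL] at hK
    exact absurd hK (Nat.pow_right_injective hp |>.ne (by norm_num))

lemma mStar_le_mul_card_of_denseCD [Finite G] {p : ℕ} [Fact p.Prime] (hd : DenseCD G)
    (hdvd : p ^ 2 ∣ Nat.card G) : mStar G ≤ p * Nat.card G := by
  obtain ⟨L, K, hL, hLK, hK⟩ := exists_bot_lt_lt_card_eq_sq hdvd
  obtain ⟨X, hX, -, hXK⟩ := hd ⊥ K (hL.trans hLK) ⟨L, hL, hLK⟩
  calc mStar G = mCD G X := hX.symm
    _ ≤ Nat.card X * Nat.card G := mCD_le_card_mul_card X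
    _ ≤ p * Nat.card G := Nat.mul_le_mul_right _ <| by
      simpa using Subgroup.card_le_pow_of_lt_of_card_eq_pow_succ Fact.out hXK hK

end ChermakDelgado

theorem stmt8 (G : Type*) [Group G] [Finite G] (p n : ℕ) (hp : p.Prime) (hn : 2 ≤ n)
    (hcard : Nat.card G = p ^ n) (hd : DenseCD G) :
    Nat.card (Subgroup.center G) = p ∧ mStar G = p ^ (n + 1) := by
  have := Fact.mk hp
  have hupper : mStar G ≤ p * p ^ n :=
    hcard ▸ mStar_le_mul_card_of_denseCD hd (hcard ▸ pow_dvd_pow p hn)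
  have hlower : Nat.card (Subgroup.center G) * p ^ n ≤ mStar G :=
    hcard ▸ mCD_center (G := G) ▸ mCD_le_mStar _
  have hZ : p ≤ Nat.card (Subgroup.center G) := by
    obtain ⟨k, hk, hZ⟩ := IsPGroup.card_center_eq_prime_pow hcard (by omega)
    exact hZ ▸ Nat.le_self_pow hk.ne' p
  have hZp : Nat.card (Subgroup.center G) = p :=
    le_antisymm (Nat.le_of_mul_le_mul_right (hlower.trans hupper) (pow_pos hp.pos n)) hZ
  refine ⟨hZp, le_antisymm (pow_succ' p n ▸ hupper) ?_⟩
  calc p ^ (n + 1) = Nat.card (Subgroup.center G) * p ^ n := by rw [hZp, pow_succ']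
    _ ≤ mStar G := hlower
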